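/- Let p be a prime, k and r positive integers with k/2 ≤ r ≤ k, ε ∈ {1, −1}, and m₁ = ε + p^r·m for some integer m not divisible by p. Then for an integer m₂ not divisible by p, S(m₂, p^k) = S(m₁, p^k) if and only if m₂ ≡ ε + p^r·m' (mod p^k) for some integer m' not divisible by p; and in this case S(m₁, p^k) = ε·(2/p^k + p^{2r−k} − 3). -/

import Mathlib

open scoped Classical
open Finset

/-- The sawtooth function `((x))`. -/
noncomputable def saw (x : ℝ) : ℝ :=
  if ∃ z : ℤ, (z : ℝ) = x then 0 else x - ⌊x⌋ - 1/2

/-- The classical Dedekind sum `s(m,n)`. -/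
noncomputable def ded (m n : ℤ) : ℝ :=
  ∑ k ∈ Finset.Icc (1 : ℤ) n, saw ((k : ℝ) / n) * saw ((m : ℝ) * k / n)

/-- The normalized Dedekind sum `S(m,n) = 12 s(m,n)`. -/
noncomputable def Sded (m n : ℤ) : ℝ := 12 * ded m n

/-!
Write `A(m, n) = ∑_{0 ≤ j < n} j (m j mod n)` (`mulEmodSum m n`); then
`n² S(m, n) = 12 A(m, n) - 3 n² (n - 1)`.

For `m = 1 + b m'` and `n = b d` with `d ∣ b`, multiplication by `m` moves each `j ∈ [0, n)` by
either `b e` or `b e - n`, where `e = m' j mod d`. The resulting quadratic relation, together with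
the fact that `j ↦ m j mod n` permutes `[0, n)`, evaluates `A` exactly and gives
`S(1 + b m', b d) = 2/(b d) + b/d - 3`; with `S(-m, n) = -S(m, n)` this is the value at `ε + pʳ m`.

Conversely `12 A(m, n) ≡ n (m + m⁻¹) [ZMOD n²]`, so `S(m₂, pᵏ) = ε (2/pᵏ + t - 3)` with `t ∈ ℤ`
forces `m₂ + m₂⁻¹ ≡ 2ε [ZMOD pᵏ]`, i.e. `pᵏ ∣ (m₂ - ε)²`. Then `m₂ ≡ ε + pᵃ y` with `k ≤ 2a` and
`p ∤ y`, and comparing values gives `p^(2a-k) = p^(2r-k)`, i.e. `a = r`.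
-/

lemma saw_eq_ite_fract (x : ℝ) : saw x = if Int.fract x = 0 then 0 else Int.fract x - 1 / 2 := by
  have h : Int.fract x = 0 ↔ ∃ z : ℤ, (z : ℝ) = x := Int.fract_eq_zero_iff
  simp only [saw, ← h]
  rfl

lemma saw_intCast (z : ℤ) : saw z = 0 := by
  simp [saw_eq_ite_fract]

lemma saw_add_intCast (x : ℝ) (z : ℤ) : saw (x + z) = saw x := by
  simp only [saw_eq_ite_fract, Int.fract_add_intCast]

lemma saw_neg (x : ℝ) : saw (-x) = -saw x := by
  by_cases h : Int.fract x = 0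
  · simp [saw_eq_ite_fract, h, Int.fract_neg_eq_zero]
  · simp only [saw_eq_ite_fract, Int.fract_neg h, h, if_false, sub_eq_zero]
    split_ifs with h'
    · exact absurd h'.symm (Int.fract_lt_one x).ne
    · ring

lemma saw_intCast_div {j n : ℤ} (hn : 0 < n) (hj : ¬ n ∣ j) :
    saw (j / n) = (j % n : ℤ) / n - 1 / 2 := by
  lift n to ℕ using hn.le
  have hfract : Int.fract ((j : ℝ) / (n : ℕ)) = (j % n : ℤ) / (n : ℕ) := by
    simpa using Int.fract_div_intCast_eq_div_intCast_mod (k := ℝ) (m := j) (n := n)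
  have hmod : (j % n : ℤ) ≠ 0 := fun h => hj (Int.dvd_of_emod_eq_zero h)
  rw [saw_eq_ite_fract, Int.cast_natCast, hfract, if_neg]
  exact div_ne_zero (mod_cast hmod) (Nat.cast_ne_zero.mpr (by omega))

section IcoSums

variable {M : Type*} [AddCommMonoid M]

lemma two_mul_sum_Ico_id {n : ℤ} (hn : 0 ≤ n) : 2 * ∑ j ∈ Ico 0 n, j = n * (n - 1) := by
  induction n, hn using Int.leInduction with
  | base => simp
  | succ n hn ih =>
    rw [← sum_Ico_add_eq_sum_Ico_add_one hn, mul_add, ih]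
    ring

lemma six_mul_sum_Ico_sq {n : ℤ} (hn : 0 ≤ n) :
    6 * ∑ j ∈ Ico 0 n, j ^ 2 = n * (n - 1) * (2 * n - 1) := by
  induction n, hn using Int.leInduction with
  | base => simp
  | succ n hn ih =>
    rw [← sum_Ico_add_eq_sum_Ico_add_one hn, mul_add, ih]
    ring

lemma sum_Ico_emod_mul {m n : ℤ} (hn : 0 < n) (hm : IsCoprime m n) (g : ℤ → M) :
    ∑ j ∈ Ico 0 n, g (m * j % n) = ∑ j ∈ Ico 0 n, g j := by
  obtain ⟨u, v, huv⟩ := hm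
  have hmem (a j : ℤ) : a * j % n ∈ Ico 0 n :=
    mem_Ico.2 ⟨Int.emod_nonneg _ hn.ne', Int.emod_lt_of_pos _ hn⟩
  have hinv (a b : ℤ) (hab : a * b ≡ 1 [ZMOD n]) (j : ℤ) (hj : j ∈ Ico 0 n) :
      a * (b * j % n) % n = j := by
    rw [mem_Ico] at hj
    have h : a * (b * j % n) ≡ j [ZMOD n] :=
      calc a * (b * j % n) ≡ a * (b * j) [ZMOD n] := (Int.mod_modEq _ _).mul_left a
        _ = a * b * j := by ring
        _ ≡ 1 * j [ZMOD n] := hab.mul_right j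
        _ = j := one_mul j
    rw [h, Int.emod_eq_of_lt hj.1 hj.2]
  have hum : u * m ≡ 1 [ZMOD n] := (Int.modEq_iff_dvd.2 ⟨-v, by linear_combination huv⟩).symm
  exact sum_nbij' (m * · % n) (u * · % n) (fun j _ => hmem m j) (fun j _ => hmem u j)
    (hinv u m hum) (hinv m u (by rwa [mul_comm])) (fun _ _ => rfl)

lemma sum_Ico_mul_emod {G : Type*} [AddCommGroup G] {b d : ℤ} (hb : 0 ≤ b) (hd : 0 ≤ d)
    (g : ℤ → G) : ∑ j ∈ Ico 0 (b * d), g (j % d) = b • ∑ c ∈ Ico 0 d, g c := by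
  induction b, hb using Int.leInduction with
  | base => simp
  | succ b hb ih =>
    have hshift : ∑ j ∈ Ico (b * d) ((b + 1) * d), g (j % d) = ∑ c ∈ Ico 0 d, g c := by
      have h := sum_Ico_add' (fun j => g (j % d)) 0 d (b * d)
      rw [zero_add] at h
      rw [show (b + 1) * d = d + b * d by ring, ← h]
      refine sum_congr rfl fun c hc => ?_
      rw [mem_Ico] at hc
      rw [Int.add_mul_emod_self_right, Int.emod_eq_of_lt hc.1 hc.2]
    rw [← Ico_union_Ico_eq_Ico (b := b * d) (by positivity) (by nlinarith),
      sum_union (Ico_disjoint_Ico_consecutive _ _ _), ih, hshift, add_smul, one_smul]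

end IcoSums

noncomputable def mulEmodSum (m n : ℤ) : ℤ := ∑ j ∈ Ico 0 n, j * (m * j % n)

lemma sum_Ico_two_mul_sub_mul_two_mul_emod_sub {m n : ℤ} (hn : 0 < n) (hm : IsCoprime m n) :
    ∑ j ∈ Ico 0 n, (2 * j - n) * (2 * (m * j % n) - n)
      = 4 * mulEmodSum m n - 2 * n ^ 2 * (n - 1) + n ^ 3 := by
  have hperm : ∑ j ∈ Ico 0 n, m * j % n = ∑ j ∈ Ico 0 n, j := sum_Ico_emod_mul hn hm id
  have hcard : (#(Ico 0 n) : ℤ) = n := by simp [hn.le]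
  have hid := two_mul_sum_Ico_id hn.le
  simp only [show ∀ j : ℤ, (2 * j - n) * (2 * (m * j % n) - n)
      = 4 * (j * (m * j % n)) - 2 * n * j - 2 * n * (m * j % n) + n ^ 2 from fun j => by ring,
    sum_add_distrib, sum_sub_distrib, ← mul_sum, sum_const, nsmul_eq_mul, hcard, hperm,
    mulEmodSum]
  rw [← mul_sum]
  linear_combination (-2 * n) * hid

lemma sq_mul_Sded {m n : ℤ} (hn : 0 < n) (hm : IsCoprime m n) :
    (n : ℝ) ^ 2 * Sded m n = 12 * mulEmodSum m n - 3 * n ^ 2 * (n - 1) := by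
  have hterm : ∀ j ∈ Ioo 0 n, saw (j / n) * saw (m * j / n)
      = (((2 * j - n) * (2 * (m * j % n) - n) : ℤ) : ℝ) / (4 * n ^ 2) := by
    intro j hj
    rw [mem_Ioo] at hj
    have hj' : ¬ n ∣ j := fun h => (Int.le_of_dvd hj.1 h).not_gt hj.2
    have hmj : ¬ n ∣ m * j := fun h => hj' (hm.symm.dvd_of_dvd_mul_left h)
    have hcast : (m : ℝ) * j / n = ((m * j : ℤ) : ℝ) / n := by push_cast; ring
    have hn' : (n : ℝ) ≠ 0 := by positivity
    rw [hcast, saw_intCast_div hn hj', saw_intCast_div hn hmj, Int.emod_eq_of_lt hj.1.le hj.2]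
    field_simp
    push_cast
    ring
  have hlast : saw ((n : ℤ) / n) * saw (m * n / n) = 0 := by
    rw [div_self (by positivity), ← Int.cast_one, saw_intCast, zero_mul]
  have hfirst := add_sum_Ioo_eq_sum_Ico hn (f := fun j : ℤ => (2 * j - n) * (2 * (m * j % n) - n))
  rw [sum_Ico_two_mul_sub_mul_two_mul_emod_sub hn hm] at hfirst
  rw [Sded, ded, ← zero_add 1, Icc_add_one_left_eq_Ioc, ← sum_Ioo_add_eq_sum_Ioc hn, hlast,
    add_zero, sum_congr rfl hterm, ← sum_div, ← Int.cast_sum,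
    show ∑ j ∈ Ioo 0 n, (2 * j - n) * (2 * (m * j % n) - n)
      = 4 * mulEmodSum m n - 2 * n ^ 2 * (n - 1) + n ^ 3 - n ^ 2 by simp at hfirst; linarith]
  have hn' : (n : ℝ) ≠ 0 := by positivity
  push_cast
  field_simp
  ring

lemma Sded_congr {m m' n : ℤ} (h : m ≡ m' [ZMOD n]) : Sded m n = Sded m' n := by
  rcases eq_or_ne n 0 with rfl | hn
  · simp [Sded, ded]
  obtain ⟨c, hc⟩ := Int.modEq_iff_dvd.1 h.symm
  have hn' : (n : ℝ) ≠ 0 := by exact_mod_cast hn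
  have hm : (m : ℝ) = m' + n * c := by exact_mod_cast (by linear_combination hc : m = m' + n * c)
  unfold Sded ded
  congr 1
  refine sum_congr rfl fun j _ => ?_
  rw [show (m : ℝ) * j / n = m' * j / n + ((c * j : ℤ) : ℝ) by rw [hm]; push_cast; field_simp,
    saw_add_intCast]

lemma Sded_neg (m n : ℤ) : Sded (-m) n = -Sded m n := by
  simp only [Sded, ded, Int.cast_neg, neg_mul, neg_div, saw_neg, mul_neg, sum_neg_distrib]

lemma sq_dvd_twelve_mulEmodSum_sub {m n u : ℤ} (hn : 0 < n) (hmu : m * u ≡ 1 [ZMOD n]) :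
    n ^ 2 ∣ 12 * mulEmodSum m n - n * (m + u) := by
  obtain ⟨c, hc⟩ := Int.modEq_iff_dvd.1 hmu
  have hcop : IsCoprime m n := ⟨u, c, by linear_combination -hc⟩
  have hperm : ∑ j ∈ Ico 0 n, (m * j % n) ^ 2 = ∑ j ∈ Ico 0 n, j ^ 2 :=
    sum_Ico_emod_mul hn hcop (· ^ 2)
  have hexpand : ∑ j ∈ Ico 0 n, (m * j - m * j % n) ^ 2
      = (m ^ 2 + 1) * ∑ j ∈ Ico 0 n, j ^ 2 - 2 * m * mulEmodSum m n := by
    simp only [show ∀ j : ℤ, (m * j - m * j % n) ^ 2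
        = m ^ 2 * j ^ 2 - 2 * m * (j * (m * j % n)) + (m * j % n) ^ 2 from fun j => by ring,
      sum_add_distrib, sum_sub_distrib, ← mul_sum, hperm, mulEmodSum]
    ring
  have hdvd : n ^ 2 ∣ ∑ j ∈ Ico 0 n, (m * j - m * j % n) ^ 2 :=
    dvd_sum fun j _ => ⟨(m * j / n) ^ 2, by rw [Int.emod_def]; ring⟩
  rw [hexpand] at hdvd
  have hsq := six_mul_sum_Ico_sq hn.le
  -- `6 ∑ j² = n(n-1)(2n-1) ≡ n [ZMOD n²]` turns `hdvd` into `12 m A ≡ n(m² + 1)`.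
  have key : m * (12 * mulEmodSum m n - n * (m + u))
      = n ^ 2 * ((m ^ 2 + 1) * (2 * n - 3) + c)
        - 6 * ((m ^ 2 + 1) * ∑ j ∈ Ico 0 n, j ^ 2 - 2 * m * mulEmodSum m n) := by
    linear_combination (m ^ 2 + 1) * hsq + n * hc
  have hmul : n ^ 2 ∣ m * (12 * mulEmodSum m n - n * (m + u)) := by
    rw [key]
    exact (dvd_mul_right _ _).sub (hdvd.mul_left 6)
  exact hcop.symm.pow_left.dvd_of_dvd_mul_left hmul

lemma two_mul_mulEmodSum {m n : ℤ} (hn : 0 < n) (hm : IsCoprime m n) :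
    2 * mulEmodSum m n = 2 * ∑ j ∈ Ico 0 n, j ^ 2 - ∑ j ∈ Ico 0 n, (m * j % n - j) ^ 2 := by
  have hperm : ∑ j ∈ Ico 0 n, (m * j % n) ^ 2 = ∑ j ∈ Ico 0 n, j ^ 2 :=
    sum_Ico_emod_mul hn hm (· ^ 2)
  simp only [show ∀ j : ℤ, (m * j % n - j) ^ 2
      = (m * j % n) ^ 2 - 2 * (j * (m * j % n)) + j ^ 2 from fun j => by ring,
    sum_add_distrib, sum_sub_distrib, ← mul_sum, hperm, mulEmodSum]
  ring

section OneAddMul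

variable {b d m' : ℤ}

lemma one_add_mul_mul_emod_sub_mul_eq_zero (hb : 0 < b) (hd : 0 < d) {j : ℤ}
    (hj : j ∈ Ico 0 (b * d)) :
    ((1 + b * m') * j % (b * d) - j - b * (m' * j % d))
      * ((1 + b * m') * j % (b * d) - j - b * (m' * j % d) + b * d) = 0 := by
  rw [mem_Ico] at hj
  obtain ⟨q, hq⟩ : ∃ q, (1 + b * m') * j % (b * d) - j - b * (m' * j % d) = b * d * q :=
    ⟨m' * j / d - (1 + b * m') * j / (b * d), by rw [Int.emod_def, Int.emod_def]; ring⟩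
  have hR := Int.emod_nonneg ((1 + b * m') * j) (mul_pos hb hd).ne'
  have hR' := Int.emod_lt_of_pos ((1 + b * m') * j) (mul_pos hb hd)
  have he := Int.emod_nonneg (m' * j) hd.ne'
  have he' := Int.emod_lt_of_pos (m' * j) hd
  have hq₁ : b * d * q < b * d * 1 := by nlinarith
  have hq₂ : b * d * (-2) < b * d * q := by nlinarith
  have : q = 0 ∨ q = -1 := by
    have := lt_of_mul_lt_mul_left hq₁ (mul_pos hb hd).le
    have := lt_of_mul_lt_mul_left hq₂ (mul_pos hb hd).le
    omega
  rw [hq]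
  rcases this with rfl | rfl <;> ring

lemma isCoprime_one_add_mul (hdb : d ∣ b) : IsCoprime (1 + b * m') (b * d) := by
  obtain ⟨t, ht⟩ := hdb
  exact ⟨1 - b * m', t * m' ^ 2, by rw [ht]; ring⟩

lemma sum_Ico_one_add_mul_emod_sub_sq (hb : 0 < b) (hd : 0 < d) (hdb : d ∣ b)
    (hm' : IsCoprime m' d) :
    ∑ j ∈ Ico 0 (b * d), ((1 + b * m') * j % (b * d) - j) ^ 2
      = b ^ 2 * ∑ c ∈ Ico 0 d, c * (b * d - b * c) := by
  have hn : 0 < b * d := mul_pos hb hd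
  have hcop := isCoprime_one_add_mul (m' := m') hdb
  have hsum : ∑ j ∈ Ico 0 (b * d), ((1 + b * m') * j % (b * d) - j) = 0 := by
    have h : ∑ j ∈ Ico 0 (b * d), (1 + b * m') * j % (b * d) = ∑ j ∈ Ico 0 (b * d), j :=
      sum_Ico_emod_mul hn hcop id
    rw [sum_sub_distrib, h, sub_self]
  have hres (j : ℤ) : m' * ((1 + b * m') * j % (b * d)) % d = m' * j % d := by
    have h : (1 + b * m') * j ≡ j [ZMOD d] :=
      Int.modEq_iff_dvd.2 (by
        rw [show j - (1 + b * m') * j = -(b * (m' * j)) by ring]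
        exact (hdb.mul_right _).neg_right)
    exact (((Int.mod_modEq _ _).of_dvd (dvd_mul_left d b)).trans h).mul_left m'
  have hweighted : ∑ j ∈ Ico 0 (b * d), m' * j % d * ((1 + b * m') * j % (b * d) - j) = 0 := by
    have h := sum_Ico_emod_mul hn hcop (fun x => m' * x % d * x)
    simp only [hres] at h
    rw [← sub_eq_zero, ← sum_sub_distrib] at h
    simpa only [mul_sub] using h
  have hperiod : ∑ j ∈ Ico 0 (b * d), m' * j % d * (b * d - b * (m' * j % d))
      = b * ∑ c ∈ Ico 0 d, c * (b * d - b * c) := by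
    have hmod (j : ℤ) : m' * (j % d) % d = m' * j % d := (Int.mod_modEq j d).mul_left m'
    have h := sum_Ico_mul_emod hb.le hd.le (fun c => m' * c % d * (b * d - b * (m' * c % d)))
    simp only [hmod, smul_eq_mul] at h
    rw [h, sum_Ico_emod_mul hd hm' (fun x => x * (b * d - b * x))]
  -- Each `j` is moved by `b e` or `b e - b d`, where `e = m' j % d`; this quadratic relation
  -- reduces the sum of squares to the two vanishing sums above.
  have hpoint : ∀ j ∈ Ico 0 (b * d), ((1 + b * m') * j % (b * d) - j) ^ 2
      = 2 * b * (m' * j % d * ((1 + b * m') * j % (b * d) - j))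
        - b * d * ((1 + b * m') * j % (b * d) - j)
        + b * (m' * j % d * (b * d - b * (m' * j % d))) := fun j hj => by
    linear_combination one_add_mul_mul_emod_sub_mul_eq_zero hb hd hj
  rw [sum_congr rfl hpoint, sum_add_distrib, sum_sub_distrib, ← mul_sum, ← mul_sum, ← mul_sum,
    hweighted, hsum, hperiod]
  ring

lemma twelve_mulEmodSum_one_add_mul (hb : 0 < b) (hd : 0 < d) (hdb : d ∣ b)
    (hm' : IsCoprime m' d) :
    12 * mulEmodSum (1 + b * m') (b * d)
      = b * d * (b ^ 2 + 2 + 3 * (b * d) ^ 2 - 6 * (b * d)) := by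
  have hn : 0 < b * d := mul_pos hb hd
  have h := two_mul_mulEmodSum hn (isCoprime_one_add_mul (m' := m') hdb)
  rw [sum_Ico_one_add_mul_emod_sub_sq hb hd hdb hm'] at h
  rw [sum_congr rfl fun c _ => show c * (b * d - b * c) = b * d * c - b * c ^ 2 by ring,
    sum_sub_distrib, ← mul_sum, ← mul_sum] at h
  linear_combination 6 * h + 2 * six_mul_sum_Ico_sq hn.le - 3 * b ^ 3 * d * two_mul_sum_Ico_id hd.le
    + b ^ 3 * six_mul_sum_Ico_sq hd.le

lemma Sded_one_add_mul (hb : 0 < b) (hd : 0 < d) (hdb : d ∣ b) (hm' : IsCoprime m' d) :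
    Sded (1 + b * m') (b * d) = 2 / (b * d) + b / d - 3 := by
  have h := sq_mul_Sded (mul_pos hb hd) (isCoprime_one_add_mul (m' := m') hdb)
  have h12 : (12 * mulEmodSum (1 + b * m') (b * d) : ℝ)
      = b * d * (b ^ 2 + 2 + 3 * (b * d) ^ 2 - 6 * (b * d)) := by
    exact_mod_cast twelve_mulEmodSum_one_add_mul hb hd hdb hm'
  have hb' : (b : ℝ) ≠ 0 := by positivity
  have hd' : (d : ℝ) ≠ 0 := by positivity
  push_cast at h
  apply mul_left_cancel₀ (pow_ne_zero 2 (mul_ne_zero hb' hd'))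
  rw [h, h12]
  field_simp
  ring

end OneAddMul

lemma Sded_sign_add_prime_pow_mul {p : ℕ} (hp : p.Prime) {a k : ℕ} (hak : a ≤ k) (hka : k ≤ 2 * a)
    {ε m' : ℤ} (hε : ε = 1 ∨ ε = -1) (hm' : ¬ (p : ℤ) ∣ m') :
    Sded (ε + (p : ℤ) ^ a * m') ((p : ℤ) ^ k)
      = ε * (2 / (p : ℝ) ^ k + (p : ℝ) ^ (2 * (a : ℤ) - k) - 3) := by
  have hp0 : (0 : ℤ) < p := by exact_mod_cast hp.pos
  have hp0' : (p : ℝ) ≠ 0 := by exact_mod_cast hp.ne_zero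
  have hcop : IsCoprime m' ((p : ℤ) ^ (k - a)) :=
    ((Nat.prime_iff_prime_int.mp hp).coprime_iff_not_dvd.2 hm').symm.pow_right
  have hpow : (p : ℤ) ^ a * (p : ℤ) ^ (k - a) = (p : ℤ) ^ k := by
    rw [← pow_add, Nat.add_sub_cancel' hak]
  have hzpow : (p : ℝ) ^ a / (p : ℝ) ^ (k - a) = (p : ℝ) ^ (2 * (a : ℤ) - k) := by
    rw [← zpow_natCast, ← zpow_natCast, ← zpow_sub₀ hp0', Nat.cast_sub hak]
    ring_nf
  have hone {n : ℤ} (hn : IsCoprime n ((p : ℤ) ^ (k - a))) :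
      Sded (1 + (p : ℤ) ^ a * n) ((p : ℤ) ^ k)
        = 2 / (p : ℝ) ^ k + (p : ℝ) ^ (2 * (a : ℤ) - k) - 3 := by
    rw [← hpow, Sded_one_add_mul (pow_pos hp0 a) (pow_pos hp0 (k - a))
      (pow_dvd_pow _ (by omega)) hn, ← hzpow]
    push_cast
    rw [← pow_add, Nat.add_sub_cancel' hak]
  rcases hε with rfl | rfl
  · rw [hone hcop, Int.cast_one, one_mul]
  · rw [show -1 + (p : ℤ) ^ a * m' = -(1 + (p : ℤ) ^ a * -m') by ring, Sded_neg,
      hone hcop.neg_left, Int.cast_neg, Int.cast_one, neg_one_mul]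

lemma dvd_sq_sub_of_Sded_eq {m n ε t : ℤ} (hn : 0 < n) (hm : IsCoprime m n)
    (hε : ε = 1 ∨ ε = -1) (h : Sded m n = ε * (2 / n + t - 3)) : n ∣ (m - ε) ^ 2 := by
  obtain ⟨u, v, huv⟩ := hm
  obtain ⟨w, hw⟩ := sq_dvd_twelve_mulEmodSum_sub hn (m := m) (u := u)
    (Int.modEq_iff_dvd.2 ⟨v, by linear_combination -huv⟩)
  have hA : 12 * mulEmodSum m n = 3 * n ^ 2 * (n - 1) + ε * (2 * n + n ^ 2 * t - 3 * n ^ 2) := by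
    have hS := sq_mul_Sded hn ⟨u, v, huv⟩
    have hn' : (n : ℝ) ≠ 0 := by positivity
    rw [h] at hS
    field_simp at hS
    exact_mod_cast (by linear_combination -hS :
      (12 * mulEmodSum m n : ℝ) = 3 * n ^ 2 * (n - 1) + ε * (2 * n + n ^ 2 * t - 3 * n ^ 2))
  obtain ⟨x, hx⟩ : n ∣ m + u - 2 * ε := by
    refine ⟨ε * t - 3 * ε + 3 * (n - 1) - w, mul_left_cancel₀ hn.ne' ?_⟩
    linear_combination hA - hw
  have hε2 : ε ^ 2 = 1 := by rcases hε with rfl | rfl <;> norm_num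
  exact ⟨m * x + v, by linear_combination hε2 - huv + m * hx⟩

lemma exists_modEq_pow_mul_of_pow_dvd_sq {p : ℕ} (hp : p.Prime) {k : ℕ} {x : ℤ}
    (h : (p : ℤ) ^ k ∣ x ^ 2) :
    ∃ a y, a ≤ k ∧ k ≤ 2 * a ∧ ¬ (p : ℤ) ∣ y ∧ x ≡ (p : ℤ) ^ a * y [ZMOD (p : ℤ) ^ k] := by
  have hp' : Prime (p : ℤ) := Nat.prime_iff_prime_int.mp hp
  by_cases hx : (p : ℤ) ^ k ∣ x
  · refine ⟨k, 1, le_rfl, by omega, hp'.not_dvd_one, ?_⟩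
    rw [mul_one]
    exact (Int.modEq_zero_iff_dvd.2 hx).trans (Int.modEq_zero_iff_dvd.2 dvd_rfl).symm
  have hx0 : x ≠ 0 := by rintro rfl; exact hx (dvd_zero _)
  obtain ⟨y, hxy, hy⟩ := (Int.finiteMultiplicity_iff (a := p) (b := x) |>.2
    ⟨by simpa using hp.ne_one, hx0⟩).exists_eq_pow_mul_and_not_dvd
  set a := multiplicity (p : ℤ) x
  have hak : a < k := by
    by_contra! hka
    exact hx (hxy ▸ (pow_dvd_pow _ hka).mul_right y)
  have hka : k ≤ 2 * a := by
    have hcop : IsCoprime ((p : ℤ) ^ k) (y ^ 2) :=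
      ((hp'.coprime_iff_not_dvd.2 hy).pow_left).pow_right
    rw [hxy, mul_pow, ← pow_mul, mul_comm a] at h
    exact (pow_dvd_pow_iff hp'.ne_zero hp'.not_isUnit).1 (hcop.dvd_of_dvd_mul_right h)
  exact ⟨a, y, hak.le, hka, hy, hxy ▸ Int.ModEq.refl _⟩

theorem prime_power_equal_dedekind_sums_general (p : ℕ) (hp : p.Prime) (k r : ℕ)
    (hkr : k ≤ 2 * r) (hrk : r ≤ k)
    (ε : ℤ) (hε : ε = 1 ∨ ε = -1) (m : ℤ) (hm : ¬ (p : ℤ) ∣ m)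
    (m₁ : ℤ) (hm₁ : m₁ = ε + (p : ℤ) ^ r * m)
    (m₂ : ℤ) (hm₂ : ¬ (p : ℤ) ∣ m₂) :
    (Sded m₂ ((p : ℤ) ^ k) = Sded m₁ ((p : ℤ) ^ k) ↔
      ∃ m' : ℤ, ¬ (p : ℤ) ∣ m' ∧ m₂ ≡ ε + (p : ℤ) ^ r * m' [ZMOD (p : ℤ) ^ k]) ∧
    Sded m₁ ((p : ℤ) ^ k) =
      (ε : ℝ) * (2 / (p : ℝ) ^ k + (p : ℝ) ^ (2 * (r : ℤ) - (k : ℤ)) - 3) := by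
  have hvalue {a : ℕ} {x y : ℤ} (hak : a ≤ k) (hka : k ≤ 2 * a) (hy : ¬ (p : ℤ) ∣ y)
      (hx : x ≡ ε + (p : ℤ) ^ a * y [ZMOD (p : ℤ) ^ k]) :
      Sded x ((p : ℤ) ^ k) = ε * (2 / (p : ℝ) ^ k + (p : ℝ) ^ (2 * (a : ℤ) - k) - 3) :=
    (Sded_congr hx).trans (Sded_sign_add_prime_pow_mul hp hak hka hε hy)
  have h₁ := hvalue hrk hkr hm (x := m₁) (by rw [hm₁])
  refine ⟨⟨fun h => ?_, fun ⟨m', hm', hm₂'⟩ => (hvalue hrk hkr hm' hm₂').trans h₁.symm⟩, h₁⟩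
  have hp' : Prime (p : ℤ) := Nat.prime_iff_prime_int.mp hp
  have hzpow : (p : ℝ) ^ (2 * (r : ℤ) - k) = (((p : ℤ) ^ (2 * r - k) : ℤ) : ℝ) := by
    rw [show 2 * (r : ℤ) - k = (2 * r - k : ℕ) by omega, zpow_natCast]
    norm_cast
  obtain ⟨a, y, hak, hka, hy, hxy⟩ := exists_modEq_pow_mul_of_pow_dvd_sq hp
    (dvd_sq_sub_of_Sded_eq (t := (p : ℤ) ^ (2 * r - k)) (pow_pos (by exact_mod_cast hp.pos) k)
      ((hp'.coprime_iff_not_dvd.2 hm₂).symm.pow_right) hε (by rw [h, h₁, hzpow]; push_cast; ring))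
  have hm₂' : m₂ ≡ ε + (p : ℤ) ^ a * y [ZMOD (p : ℤ) ^ k] := by
    simpa using hxy.add_left ε
  have har : a = r := by
    have hε0 : (ε : ℝ) ≠ 0 := by rcases hε with rfl | rfl <;> norm_num
    have heq := mul_left_cancel₀ hε0 ((hvalue hak hka hy hm₂').symm.trans (h.trans h₁))
    have hpow : (p : ℝ) ^ (2 * (a : ℤ) - k) = (p : ℝ) ^ (2 * (r : ℤ) - k) := by linarith
    have := zpow_right_injective₀ (by exact_mod_cast hp.pos) (by exact_mod_cast hp.ne_one) hpow
    omega
  exact ⟨y, hy, har ▸ hm₂'⟩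

theorem prime_power_equal_dedekind_sums (p : ℕ) (hp : p.Prime) (k r : ℕ)
    (hk : 0 < k) (hr : 0 < r) (hkr : k ≤ 2 * r) (hrk : r ≤ k)
    (ε : ℤ) (hε : ε = 1 ∨ ε = -1) (m : ℤ) (hm : ¬ (p : ℤ) ∣ m)
    (m₁ : ℤ) (hm₁ : m₁ = ε + (p : ℤ) ^ r * m)
    (m₂ : ℤ) (hm₂ : ¬ (p : ℤ) ∣ m₂) :
    (Sded m₂ ((p : ℤ) ^ k) = Sded m₁ ((p : ℤ) ^ k) ↔
      ∃ m' : ℤ, ¬ (p : ℤ) ∣ m' ∧ m₂ ≡ ε + (p : ℤ) ^ r * m' [ZMOD (p : ℤ) ^ k]) ∧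
    Sded m₁ ((p : ℤ) ^ k) =
      (ε : ℝ) * (2 / (p : ℝ) ^ k + (p : ℝ) ^ (2 * (r : ℤ) - (k : ℤ)) - 3) :=
  prime_power_equal_dedekind_sums_general p hp k r hkr hrk ε hε m hm m₁ hm₁ m₂ hm₂
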